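/- In the eigensystem setting, suppose (h_ν) is uniformly bounded with sup_ν ‖h_ν‖_∞ ≤ c_h, and γ_ν ≥ c·ν^{2m} for ν ≥ 1 with m > 1/2 and γ_0 = 0, h_0 bounded. Then there exists a constant c_m > 0 depending only on m, c, c_h such that for all λ ∈ (0,1] and h = λ^{1/(2m)}, the kernel K_z(·) = Σ_ν h_ν(z)h_ν(·)/(1+λγ_ν) satisfies sup_{z,z'∈[0,1]} |K_z(z')| ≤ c_m² h^{-1}; in particular K(z_0,z_0) = O(h^{-1}). -/

import Mathlib

/-!
Each term of the kernel is at most `c_h² (1 + λ γ_ν)⁻¹`, and since `h^{2m} = λ` the lower bound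
on `γ_ν` gives `(1 + λ γ_ν)⁻¹ ≤ φ(h ν)` for the decreasing profile `φ(x) = (1 + c x^{2m})⁻¹`.
By the integral test, `∑_ν φ(h ν) ≤ φ(0) + ∫_0^∞ φ(h x) dx = 1 + h⁻¹ ∫_0^∞ φ`, and `∫_0^∞ φ` is
finite because `2m > 1`. As `h ≤ 1`, one may take `c_m² = c_h² (1 + ∫_0^∞ φ)`.
-/

open Set MeasureTheory

section Profile

variable {a p H : ℝ}

lemma continuousOn_inv_one_add_mul_rpow (ha : 0 ≤ a) (hp : 0 ≤ p) :
    ContinuousOn (fun x : ℝ => (1 + a * x ^ p)⁻¹) (Ici 0) := by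
  refine (continuous_const.add (continuous_const.mul (Real.continuous_rpow_const hp))
    |>.continuousOn).inv₀ fun x hx => ?_
  have : 0 ≤ a * x ^ p := mul_nonneg ha (Real.rpow_nonneg hx p)
  exact (by linarith : (0:ℝ) < 1 + a * x ^ p).ne'

lemma antitoneOn_inv_one_add_mul_rpow (ha : 0 ≤ a) (hp : 0 ≤ p) :
    AntitoneOn (fun x : ℝ => (1 + a * x ^ p)⁻¹) (Ici 0) := by
  intro x hx y _ hxy
  have : 0 ≤ a * x ^ p := mul_nonneg ha (Real.rpow_nonneg hx p)
  dsimp only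
  gcongr

lemma integrableOn_Ioi_inv_one_add_mul_rpow (ha : 0 < a) (hp : 1 < p) :
    IntegrableOn (fun x : ℝ => (1 + a * x ^ p)⁻¹) (Ioi 0) := by
  have hcont := continuousOn_inv_one_add_mul_rpow ha.le (zero_le_one.trans hp.le)
  rw [← Ioc_union_Ioi_eq_Ioi zero_le_one]
  refine IntegrableOn.union ?_ ?_
  · exact (hcont.mono Icc_subset_Ici_self |>.integrableOn_Icc).mono_set Ioc_subset_Icc_self
  · have htail : IntegrableOn (fun x : ℝ => a⁻¹ * x ^ (-p)) (Ioi 1) :=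
      (integrableOn_Ioi_rpow_of_lt (by linarith) zero_lt_one).const_mul _
    refine htail.mono' ((hcont.mono ?_).aestronglyMeasurable measurableSet_Ioi) ?_
    · exact Ioi_subset_Ici zero_le_one
    · filter_upwards [ae_restrict_mem measurableSet_Ioi] with x (hx : 1 < x)
      have hxp : 0 < x ^ p := Real.rpow_pos_of_pos (by linarith) p
      rw [Real.norm_of_nonneg (by positivity), Real.rpow_neg (by linarith), ← mul_inv]
      gcongr
      linarith

lemma antitoneOn_inv_one_add_mul_mul_rpow (ha : 0 ≤ a) (hp : 0 ≤ p) (hH : 0 ≤ H) :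
    AntitoneOn (fun x : ℝ => (1 + a * (H * x) ^ p)⁻¹) (Ici 0) :=
  fun x (hx : 0 ≤ x) y (hy : 0 ≤ y) hxy =>
    antitoneOn_inv_one_add_mul_rpow ha hp (mul_nonneg hH hx) (mul_nonneg hH hy)
      (mul_le_mul_of_nonneg_left hxy hH)

lemma integrableOn_Ioi_inv_one_add_mul_mul_rpow (ha : 0 < a) (hp : 1 < p) (hH : 0 < H) :
    IntegrableOn (fun x : ℝ => (1 + a * (H * x) ^ p)⁻¹) (Ioi 0) := by
  refine (integrableOn_Ioi_inv_one_add_mul_rpow (a := a * H ^ p) (by positivity) hp).congr_fun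
    (fun x (hx : 0 < x) => ?_) measurableSet_Ioi
  simp only [Real.mul_rpow hH.le hx.le, mul_assoc]

lemma summable_inv_one_add_mul_mul_rpow (ha : 0 < a) (hp : 1 < p) (hH : 0 < H) :
    Summable (fun n : ℕ => (1 + a * (H * n) ^ p)⁻¹) :=
  (antitoneOn_inv_one_add_mul_mul_rpow ha.le (by linarith) hH.le
    |>.summable_of_integrableOn_Ioi_zero) (integrableOn_Ioi_inv_one_add_mul_mul_rpow ha hp hH)
    fun x (hx : 0 < x) => by positivity

lemma tsum_inv_one_add_mul_mul_rpow_le (ha : 0 < a) (hp : 1 < p) (hH : 0 < H) :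
    ∑' n : ℕ, (1 + a * (H * n) ^ p)⁻¹ ≤ 1 + H⁻¹ * ∫ x in Ioi 0, (1 + a * x ^ p)⁻¹ := by
  have hsum := (antitoneOn_inv_one_add_mul_mul_rpow ha.le (by linarith) hH.le).tsum_le_integral
    (integrableOn_Ioi_inv_one_add_mul_mul_rpow ha hp hH) fun x (hx : 0 < x) => by positivity
  rwa [integral_comp_mul_left_Ioi (fun x => (1 + a * x ^ p)⁻¹) 0 hH, mul_zero,
    Real.zero_rpow (by linarith), mul_zero, add_zero, inv_one, smul_eq_mul] at hsum

end Profile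

theorem stmt7_general (m c ch : ℝ) (hm : 1/2 < m) (hc : 0 < c) (hch : 0 < ch)
    (γ : ℕ → ℝ) (hγnn : ∀ ν, 0 ≤ γ ν)
    (hγlb : ∀ ν : ℕ, 1 ≤ ν → c * (ν : ℝ) ^ (2*m) ≤ γ ν)
    (h : ℕ → ℝ → ℝ) (hhbd : ∀ ν, ∀ z ∈ Icc (0:ℝ) 1, |h ν z| ≤ ch) :
    ∃ cm : ℝ, 0 < cm ∧ ∀ l ∈ Ioc (0:ℝ) 1, ∀ z ∈ Icc (0:ℝ) 1, ∀ z' ∈ Icc (0:ℝ) 1,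
      |∑' ν, h ν z * h ν z' / (1 + l * γ ν)| ≤ cm^2 * (l ^ (1/(2*m)))⁻¹ := by
  have h2m : 1 < 2 * m := by linarith
  set I := ∫ x in Ioi 0, (1 + c * x ^ (2 * m))⁻¹
  have hI : 0 ≤ I := setIntegral_nonneg measurableSet_Ioi fun x (hx : 0 < x) => by positivity
  refine ⟨ch * √(1 + I), by positivity, fun l ⟨hl0, hl1⟩ z hz z' hz' => ?_⟩
  set H := l ^ (1 / (2 * m))
  have hH0 : 0 < H := by positivity
  have hH1 : 1 ≤ H⁻¹ := one_le_inv₀ hH0 |>.mpr (Real.rpow_le_one hl0.le hl1 (by positivity))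
  have hdom : ∀ ν : ℕ, c * (H * ν) ^ (2 * m) ≤ l * γ ν := by
    intro ν
    rcases Nat.eq_zero_or_pos ν with rfl | hν
    · simpa [Real.zero_rpow (by linarith : 2 * m ≠ 0)] using mul_nonneg hl0.le (hγnn 0)
    · rw [Real.mul_rpow hH0.le (Nat.cast_nonneg ν), ← Real.rpow_mul hl0.le,
        one_div_mul_cancel (by linarith), Real.rpow_one, mul_left_comm]
      exact mul_le_mul_of_nonneg_left (hγlb ν hν) hl0.le
  have hterm : ∀ ν : ℕ,
      ‖h ν z * h ν z' / (1 + l * γ ν)‖ ≤ ch ^ 2 * (1 + c * (H * ν) ^ (2 * m))⁻¹ := by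
    intro ν
    have hden : 0 < 1 + l * γ ν := by nlinarith [hγnn ν]
    rw [Real.norm_eq_abs, abs_div, abs_mul, abs_of_pos hden, div_eq_mul_inv, sq]
    gcongr ?_ * ?_ * (1 + ?_)⁻¹
    exacts [hhbd ν z hz, hhbd ν z' hz', hdom ν]
  calc |∑' ν, h ν z * h ν z' / (1 + l * γ ν)|
      ≤ ∑' ν : ℕ, ch ^ 2 * (1 + c * (H * ν) ^ (2 * m))⁻¹ :=
        tsum_of_norm_bounded
          ((summable_inv_one_add_mul_mul_rpow hc h2m hH0).mul_left _).hasSum hterm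
    _ = ch ^ 2 * ∑' ν : ℕ, (1 + c * (H * ν) ^ (2 * m))⁻¹ := tsum_mul_left
    _ ≤ ch ^ 2 * (1 + H⁻¹ * I) := by gcongr; exact tsum_inv_one_add_mul_mul_rpow_le hc h2m hH0
    _ ≤ ch ^ 2 * ((1 + I) * H⁻¹) := by gcongr; nlinarith
    _ = (ch * √(1 + I)) ^ 2 * H⁻¹ := by rw [mul_pow, Real.sq_sqrt (by positivity)]; ring

/-- Kernel boundedness (Lemma 2.1): `sup_{z,z'} |K_z(z')| ≤ c_m² h⁻¹` with `h = λ^{1/(2m)}`. -/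
theorem stmt7 (m c ch : ℝ) (hm : 1/2 < m) (hc : 0 < c) (hch : 0 < ch)
    (γ : ℕ → ℝ) (hγ0 : γ 0 = 0) (hγnn : ∀ ν, 0 ≤ γ ν)
    (hγlb : ∀ ν : ℕ, 1 ≤ ν → c * (ν : ℝ) ^ (2*m) ≤ γ ν)
    (h : ℕ → ℝ → ℝ) (hhbd : ∀ ν, ∀ z ∈ Icc (0:ℝ) 1, |h ν z| ≤ ch) :
    ∃ cm : ℝ, 0 < cm ∧ ∀ l ∈ Ioc (0:ℝ) 1, ∀ z ∈ Icc (0:ℝ) 1, ∀ z' ∈ Icc (0:ℝ) 1,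
      |∑' ν, h ν z * h ν z' / (1 + l * γ ν)| ≤ cm^2 * (l ^ (1/(2*m)))⁻¹ :=
  stmt7_general m c ch hm hc hch γ hγnn hγlb h hhbd
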